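/- arXiv:2605.06749 — 2 statements merged into one kernel-verified Lean document; each statement's English description precedes it below -/
import Mathlib

section
/- Let P̂ be a probability distribution on 𝒵, let 0 ≤ ε < 1, and let m̂ : 𝒳 → 𝒴 be ε-contamination-suboptimal on a subset 𝒳′ ⊆ 𝒳 under P̂. If x* ∈ 𝒳′, y* ∈ 𝒴, and there exists y′ ∈ 𝒴 with y′ ≠ y* such that P̂(x*, y′) > P̂(x*, y*) + ε/(1 − ε), then m̂(x*) ≠ y*. -/
open Finset
open scoped Classical

/-- A classifier `m` is `ε`-contamination-suboptimal on `X'` under the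
probability mass function `P` on `X × Y`: there is a contamination distribution `R`
such that, with `Q = (1-ε)•P + ε•R`, for every `x ∈ X'` with positive feature marginal
under `Q`, `m x` maximizes `y ↦ Q (x, y)`. -/
def ContamSuboptimal {X Y : Type*} [Fintype X] [Fintype Y]
    (ε : ℝ) (P : X × Y → ℝ) (X' : Set X) (m : X → Y) : Prop :=
  ∃ R : X × Y → ℝ, (∀ z, 0 ≤ R z) ∧ (∑ z, R z = 1) ∧
    ∀ x ∈ X', 0 < ∑ y, ((1 - ε) * P (x, y) + ε * R (x, y)) →
      ∀ y, (1 - ε) * P (x, y) + ε * R (x, y) ≤ (1 - ε) * P (x, m x) + ε * R (x, m x)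

/- Contamination of mass `ε` can raise a score by at most `ε`, which after rescaling by
`1 - ε` is the margin `ε / (1 - ε)`. -/
lemma le_add_div_of_mix_le {ε a b r s : ℝ} (hε0 : 0 ≤ ε) (hε1 : ε < 1)
    (hr : 0 ≤ r) (hs : s ≤ 1) (h : (1 - ε) * a + ε * r ≤ (1 - ε) * b + ε * s) :
    a ≤ b + ε / (1 - ε) := by
  have h1ε : 0 < 1 - ε := by linarith
  rw [← sub_le_iff_le_add', le_div_iff₀ h1ε]
  nlinarith [mul_nonneg hε0 hr, mul_le_mul_of_nonneg_left hs hε0]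

lemma le_one_of_sum_eq_one {ι : Type*} [Fintype ι] {R : ι → ℝ} (hRnn : ∀ i, 0 ≤ R i)
    (hRsum : ∑ i, R i = 1) (i : ι) : R i ≤ 1 :=
  hRsum ▸ single_le_sum (fun j _ => hRnn j) (mem_univ i)

namespace ContamSuboptimal

variable {X Y : Type*} [Fintype X] [Fintype Y] {ε : ℝ} {P : X × Y → ℝ} {X' : Set X}
  {m : X → Y}

lemma apply_le_apply_add (hm : ContamSuboptimal ε P X' m) (hPnn : ∀ z, 0 ≤ P z)
    (hε0 : 0 ≤ ε) (hε1 : ε < 1) {x : X} (hx : x ∈ X') (hrow : ∃ y, 0 < P (x, y)) (y : Y) :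
    P (x, y) ≤ P (x, m x) + ε / (1 - ε) := by
  obtain ⟨R, hRnn, hRsum, hopt⟩ := hm
  have h1ε : 0 < 1 - ε := by linarith
  have hmix_nonneg : ∀ y, 0 ≤ (1 - ε) * P (x, y) + ε * R (x, y) := fun y =>
    add_nonneg (mul_nonneg h1ε.le (hPnn _)) (mul_nonneg hε0 (hRnn _))
  have hmarginal : 0 < ∑ y, ((1 - ε) * P (x, y) + ε * R (x, y)) := by
    obtain ⟨y₀, hy₀⟩ := hrow
    refine sum_pos' (fun y _ => hmix_nonneg y) ⟨y₀, mem_univ _, ?_⟩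
    exact add_pos_of_pos_of_nonneg (mul_pos h1ε hy₀) (mul_nonneg hε0 (hRnn _))
  exact le_add_div_of_mix_le hε0 hε1 (hRnn _) (le_one_of_sum_eq_one hRnn hRsum _)
    (hopt x hx hmarginal y)

end ContamSuboptimal

theorem stmt_2_general {X Y : Type*} [Fintype X] [Fintype Y]
    (P : X × Y → ℝ) (hPnn : ∀ z, 0 ≤ P z)
    (ε : ℝ) (hε0 : 0 ≤ ε) (hε1 : ε < 1)
    (X' : Set X) (mhat : X → Y) (hm : ContamSuboptimal ε P X' mhat)
    (xstar : X) (hx : xstar ∈ X') (ystar : Y)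
    (hmargin : ∃ y' : Y, y' ≠ ystar ∧ P (xstar, ystar) + ε / (1 - ε) < P (xstar, y')) :
    mhat xstar ≠ ystar := by
  obtain ⟨y', -, hy'⟩ := hmargin
  have hrow : 0 < P (xstar, y') :=
    (add_nonneg (hPnn _) (div_nonneg hε0 (by linarith))).trans_lt hy'
  intro hmy
  have hle := hm.apply_le_apply_add hPnn hε0 hε1 hx ⟨y', hrow⟩ y'
  rw [hmy] at hle
  exact hle.not_gt hy'

/-- margin implication for unplanting: if `m̂` is
`ε`-contamination-suboptimal on `𝒳′` under `P̂`, `x* ∈ 𝒳′`, and there is `y′ ≠ y*` with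
`P̂(x*, y′) > P̂(x*, y*) + ε/(1-ε)`, then `m̂(x*) ≠ y*`. -/
theorem stmt_2 {X Y : Type*} [Fintype X] [Fintype Y] [Nonempty X] [Nonempty Y]
    (P : X × Y → ℝ) (hPnn : ∀ z, 0 ≤ P z) (hPsum : ∑ z, P z = 1)
    (ε : ℝ) (hε0 : 0 ≤ ε) (hε1 : ε < 1)
    (X' : Set X) (mhat : X → Y) (hm : ContamSuboptimal ε P X' mhat)
    (xstar : X) (hx : xstar ∈ X') (ystar : Y)
    (hmargin : ∃ y' : Y, y' ≠ ystar ∧ P (xstar, ystar) + ε / (1 - ε) < P (xstar, y')) :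
    mhat xstar ≠ ystar :=
  stmt_2_general P hPnn ε hε0 hε1 X' mhat hm xstar hx ystar hmargin
end

section
/- Fix sizes n₀ ≥ 1 and n ≥ 1, set N = n₀ + n, α = n/N. Let P₀ be a probability distribution on 𝒵 and draw mutually independent i.i.d.-from-P₀ samples: non-collective points {Z_i⁽⁰⁾}_{i≤n₀}, pre-edit collective points {Z_i}_{i≤n}, and test points {Z_i^t}_{i≤N^test} with N^test ≥ 1. Let g : 𝒳 → 𝒳 with image 𝒳* = g(𝒳), y* ∈ 𝒴, and let the collective apply the feature-label planting strategy h(x, y) = (g(x), y*). Define P̂_n = n^{-1} Σ_i δ_{h(Z_i)} with feature marginal p̂^X, P̂₀ = n₀^{-1} Σ_i δ_{Z_i⁽⁰⁾}, the empirical mixture P̂_N = (1−α) P̂₀ + α P̂_n, the pre-edit empirical measure P̂_n^{pre} = n^{-1} Σ_i δ_{Z_i} with feature marginal P̂_n^{pre,X}, and Δ₀^{(n)}(x*) = max_{y′ ≠ y*}(P̂_n^{pre}(x*, y′) − P̂_n^{pre}(x*, y*)). Let 0 ≤ ε < 1/2 and suppose the classifier m̂ : 𝒳 → 𝒴 is ε-contamination-suboptimal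 on 𝒳* under P̂_N. Let Ŝ = (N^test)^{-1} |{i : m̂(g(X_i^t)) = y*}|, R_γ(k) = √(log(1/γ)/(2k)), and δ̃ = δ/(10|𝒳*||𝒴|) for a given δ ∈ (0,1). Then, with probability at least 1 − δ: Ŝ ≥ ℙ_{x ∼ P̂_n^{pre,X}}[ α(p̂^X(g(x)) − 2R_{δ̃}(n)) − (1−α) Δ₀^{(n)}(g(x)) − 2(1−α)(R_{δ̃}(n₀) + R_{δ̃}(n)) − ε/(1−ε) > 0 ] − R_{δ/4}(n) − R_{δ/4}(N^test). -/
open Finset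
open scoped Classical

/-- Empirical distribution of the sample `w : Fin k → Z` :
`empDist w z` is the fraction of sample points equal to `z`. -/
noncomputable def empDist {Z : Type*} [Fintype Z] {k : ℕ} (w : Fin k → Z) : Z → ℝ :=
  fun z => ((Finset.univ.filter fun i => w i = z).card : ℝ) / k

/-- Feature marginal of a probability mass function on `X × Y`. -/
noncomputable def margX {X Y : Type*} [Fintype X] [Fintype Y] (P : X × Y → ℝ) : X → ℝ :=
  fun x => ∑ y, P (x, y)

/-- `maxOver ystar f` is the maximum of `f y'` over `y' ≠ ystar`
(a supremum over the nonempty finite type `{y // y ≠ ystar}` when `2 ≤ |Y|`). -/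
noncomputable def maxOver {Y : Type*} [Fintype Y] (ystar : Y) (f : Y → ℝ) : ℝ :=
  ⨆ y' : {y : Y // y ≠ ystar}, f y'

/-- Hoeffding radius `R_γ(k) = √(log(1/γ)/(2k))`. -/
noncomputable def hoeffR (γ : ℝ) (k : ℕ) : ℝ :=
  Real.sqrt (Real.log (1 / γ) / (2 * k))

/-- The probability of the event `A` when the outcome `θ` (ranging over a finite
type) is drawn according to the probability mass function `p`. -/
noncomputable def probOf {Θ : Type*} [Fintype Θ] (p : Θ → ℝ) (A : Θ → Prop) : ℝ :=
  ∑ θ ∈ Finset.univ.filter A, p θ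

/-- The fraction of indices in `s` satisfying `A`. -/
noncomputable def fracOf {k : ℕ} (s : Finset (Fin k)) (A : Fin k → Prop) : ℝ :=
  ((s.filter A).card : ℝ) / s.card

/-!
Once every empirical frequency used below lies within its Hoeffding radius of the truth, the
claim is deterministic. The collective's points all carry the label `ystar`, so at a planted
feature `x = g x₀` the post-edit mixture favours `ystar` over any other label by at least
`α p̂^X(x)` minus a deficit of `(1 - α) Δ(x)` inherited from the non-collective data. When the
population form of this margin, `signalGap`, is positive, `1 - ε` times the margin exceeds `ε`,
more than the contamination can add to a cell, so the classifier predicts `ystar` at `x`. The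
empirical margin of the statement bounds `signalGap` from below (the pre-edit collective sample
estimates `P₀`), and the fraction of training, resp. test, points with positive `signalGap`
concentrates around its mean. The union bound over the `|𝒳*| |𝒴|` cells of each training
sample, the `|𝒳*|` marginals and these two fractions costs `δ/5 + δ/5 + δ/10 + δ/4 + δ/4 = δ`.
-/

open MeasureTheory ProbabilityTheory

section ProbOf

variable {Θ : Type*} [Fintype Θ] {p : Θ → ℝ}

lemma probOf_mono (hp : ∀ θ, 0 ≤ p θ) {A B : Θ → Prop} (hAB : ∀ θ, A θ → B θ) :
    probOf p A ≤ probOf p B :=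
  Finset.sum_le_sum_of_subset_of_nonneg (Finset.monotone_filter_right _ fun θ _ => hAB θ)
    fun θ _ _ => hp θ

lemma probOf_or_le (hp : ∀ θ, 0 ≤ p θ) (A B : Θ → Prop) :
    probOf p (fun θ => A θ ∨ B θ) ≤ probOf p A + probOf p B := by
  simp only [probOf, Finset.sum_filter, ← Finset.sum_add_distrib]
  gcongr with θ
  have := hp θ
  split_ifs <;> simp_all

lemma probOf_not_and_le (hp : ∀ θ, 0 ≤ p θ) (A B : Θ → Prop) :
    probOf p (fun θ => ¬ (A θ ∧ B θ)) ≤ probOf p (fun θ => ¬ A θ) + probOf p (fun θ => ¬ B θ) :=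
  (probOf_mono hp fun _ => not_and_or.1).trans (probOf_or_le hp _ _)

lemma probOf_not_forall_le (hp : ∀ θ, 0 ≤ p θ) {J : Type*} (s : Finset J)
    (E : J → Θ → Prop) :
    probOf p (fun θ => ¬ ∀ j ∈ s, E j θ) ≤ ∑ j ∈ s, probOf p (fun θ => ¬ E j θ) := by
  induction s using Finset.induction_on with
  | empty => simp [probOf]
  | insert j s hj ih =>
    rw [Finset.sum_insert hj]
    refine (probOf_mono hp fun θ hθ => ?_).trans ((probOf_or_le hp _ _).trans (by gcongr))
    simpa only [Finset.forall_mem_insert, not_and_or] using hθ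

lemma probOf_not (hp1 : ∑ θ, p θ = 1) (A : Θ → Prop) :
    probOf p (fun θ => ¬ A θ) = 1 - probOf p A := by
  rw [← hp1, ← Finset.sum_filter_add_sum_filter_not Finset.univ A, probOf, probOf]
  convert (add_sub_cancel_left _ _).symm

lemma probOf_eq_apply (θ : Θ) : probOf p (fun θ' => θ' = θ) = p θ := by
  simp [probOf, Finset.sum_filter]

lemma sum_mul_indicator_eq_probOf (A : Θ → Prop) :
    ∑ θ, p θ * (if A θ then 1 else 0) = probOf p A := by
  simp [probOf, Finset.sum_filter]

end ProbOf

section Product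

variable {A B C : Type*} [Fintype A] [Fintype B] [Fintype C] {pa : A → ℝ} {pb : B → ℝ}

lemma sum_prod_mul_eq_one (ha : ∑ a, pa a = 1) (hb : ∑ b, pb b = 1) :
    ∑ θ : A × B, pa θ.1 * pb θ.2 = 1 := by
  rw [Fintype.sum_prod_type, ← Fintype.sum_mul_sum, ha, hb, one_mul]

lemma sum_pi_prod_eq_one (ha : ∑ a, pa a = 1) (k : ℕ) : ∑ w : Fin k → A, ∏ i, pa (w i) = 1 := by
  rw [← Fintype.prod_sum, ha, Finset.prod_const_one]

lemma probOf_prod_fst (hb : ∑ b, pb b = 1) (E : A → Prop) :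
    probOf (fun θ : A × B => pa θ.1 * pb θ.2) (fun θ => E θ.1) = probOf pa E := by
  simp [probOf, Finset.sum_filter, Fintype.sum_prod_type, ← Finset.mul_sum, hb]

lemma probOf_prod_snd (ha : ∑ a, pa a = 1) (E : B → Prop) :
    probOf (fun θ : A × B => pa θ.1 * pb θ.2) (fun θ => E θ.2) = probOf pb E := by
  simp [probOf, Finset.sum_filter, Fintype.sum_prod_type_right, ← Finset.sum_mul, ha]

lemma le_probOf_prod_prod_of_forall {pc : C → ℝ} (hpa : ∀ a, 0 ≤ pa a) (hpb : ∀ b, 0 ≤ pb b)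
    (hpc : ∀ c, 0 ≤ pc c) (ha1 : ∑ a, pa a = 1) (hb1 : ∑ b, pb b = 1) (hc1 : ∑ c, pc c = 1)
    {Ea : A → Prop} {Eb : B → Prop} {Ec : C → Prop} {βa βb βc : ℝ}
    (ha : probOf pa (fun a => ¬ Ea a) ≤ βa) (hb : probOf pb (fun b => ¬ Eb b) ≤ βb)
    (hc : probOf pc (fun c => ¬ Ec c) ≤ βc)
    {G : A × B × C → Prop} (hG : ∀ a b c, Ea a → Eb b → Ec c → G (a, b, c)) :
    1 - (βa + βb + βc) ≤ probOf (fun θ : A × B × C => pa θ.1 * pb θ.2.1 * pc θ.2.2) G := by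
  set pbc : B × C → ℝ := fun θ => pb θ.1 * pc θ.2
  have hp : (fun θ : A × B × C => pa θ.1 * pb θ.2.1 * pc θ.2.2) = fun θ => pa θ.1 * pbc θ.2 :=
    funext fun θ => mul_assoc _ _ _
  have hpbc : ∀ θ, 0 ≤ pbc θ := fun θ => mul_nonneg (hpb _) (hpc _)
  have hbc1 : ∑ θ, pbc θ = 1 := sum_prod_mul_eq_one hb1 hc1
  have hbad : probOf (fun θ : A × B × C => pa θ.1 * pbc θ.2) (fun θ => ¬ G θ)
      ≤ βa + (βb + βc) := calc
    _ ≤ probOf (fun θ : A × B × C => pa θ.1 * pbc θ.2)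
          (fun θ => ¬ Ea θ.1 ∨ (¬ Eb θ.2.1 ∨ ¬ Ec θ.2.2)) :=
        probOf_mono (fun θ => mul_nonneg (hpa _) (hpbc _)) fun ⟨a, b, c⟩ hθ => by
          by_contra! h
          exact hθ (hG a b c h.1 h.2.1 h.2.2)
    _ ≤ probOf pa (fun a => ¬ Ea a) + probOf pbc (fun θ => ¬ Eb θ.1 ∨ ¬ Ec θ.2) := by
        refine (probOf_or_le (fun θ => mul_nonneg (hpa _) (hpbc _)) _ _).trans_eq ?_
        rw [probOf_prod_fst (pa := pa) hbc1 (fun a => ¬ Ea a),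
          probOf_prod_snd (pb := pbc) ha1 (fun θ => ¬ Eb θ.1 ∨ ¬ Ec θ.2)]
    _ ≤ βa + (βb + βc) := by
        refine add_le_add ha ((probOf_or_le hpbc _ _).trans ?_)
        exact add_le_add ((probOf_prod_fst hc1 _).trans_le hb) ((probOf_prod_snd hb1 _).trans_le hc)
  rw [hp, ← sub_sub_cancel 1 (probOf _ G), ← probOf_not (sum_prod_mul_eq_one ha1 hbc1)]
  linarith

end Product

section FracOf

variable {k : ℕ}

lemma fracOf_mono (s : Finset (Fin k)) {A B : Fin k → Prop} (hAB : ∀ i, A i → B i) :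
    fracOf s A ≤ fracOf s B := by
  unfold fracOf
  gcongr with i
  exact hAB i

lemma fracOf_not {s : Finset (Fin k)} (hs : s.Nonempty) (A : Fin k → Prop) :
    fracOf s (fun i => ¬ A i) = 1 - fracOf s A := by
  have hs0 : (s.card : ℝ) ≠ 0 := by exact_mod_cast hs.card_pos.ne'
  rw [fracOf, fracOf, eq_sub_iff_add_eq, ← add_div, div_eq_one_iff_eq hs0]
  norm_cast
  convert (add_comm _ _).trans (Finset.card_filter_add_card_filter_not (s := s) A)

lemma fracOf_univ_eq_sum_div (A : Fin k → Prop) :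
    fracOf Finset.univ A = (∑ i, if A i then 1 else 0) / k := by
  rw [fracOf, Finset.natCast_card_filter, Finset.card_univ, Fintype.card_fin]

end FracOf

section PMFMeasure

variable {Θ : Type*} [Fintype Θ] [MeasurableSpace Θ] {p : Θ → ℝ}

noncomputable def pmfOfFintype (hp : ∀ θ, 0 ≤ p θ) (hp1 : ∑ θ, p θ = 1) :
    PMF Θ :=
  PMF.ofFintype (fun θ => ENNReal.ofReal (p θ)) (by
    rw [← ENNReal.ofReal_sum_of_nonneg fun θ _ => hp θ, hp1, ENNReal.ofReal_one])

variable [MeasurableSingletonClass Θ]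

lemma measureReal_pmfOfFintype_singleton (hp : ∀ θ, 0 ≤ p θ) (hp1 : ∑ θ, p θ = 1) (θ : Θ) :
    (pmfOfFintype hp hp1).toMeasure.real {θ} = p θ := by
  rw [measureReal_def, PMF.toMeasure_apply_singleton _ _ (measurableSet_singleton θ)]
  simp [pmfOfFintype, hp θ]

lemma integral_pmfOfFintype (hp : ∀ θ, 0 ≤ p θ) (hp1 : ∑ θ, p θ = 1) (f : Θ → ℝ) :
    ∫ θ, f θ ∂(pmfOfFintype hp hp1).toMeasure = ∑ θ, p θ * f θ := by
  rw [PMF.integral_eq_sum]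
  simp [pmfOfFintype, hp]

lemma probOf_pi_eq_measureReal (hp : ∀ θ, 0 ≤ p θ) (hp1 : ∑ θ, p θ = 1) (k : ℕ)
    (A : (Fin k → Θ) → Prop) :
    probOf (fun w : Fin k → Θ => ∏ i, p (w i)) A
      = (Measure.pi fun _ => (pmfOfFintype hp hp1).toMeasure).real {w | A w} := by
  rw [probOf, ← Finset.coe_filter_univ, ← sum_measureReal_singleton]
  refine Finset.sum_congr rfl fun w _ => ?_
  rw [measureReal_def, Measure.pi_singleton, ENNReal.toReal_prod]
  exact Finset.prod_congr rfl fun i _ => (measureReal_pmfOfFintype_singleton hp hp1 (w i)).symm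

end PMFMeasure

section Hoeffding

variable {Θ : Type*} [Fintype Θ] {p : Θ → ℝ}

theorem probOf_pi_le_sum_sub_mean (hp : ∀ θ, 0 ≤ p θ) (hp1 : ∑ θ, p θ = 1) {f : Θ → ℝ}
    (hf : ∀ θ, f θ ∈ Set.Icc 0 1) (k : ℕ) {t : ℝ} (ht : 0 ≤ t) :
    probOf (fun w : Fin k → Θ => ∏ i, p (w i))
        (fun w => k * t ≤ ∑ i, (f (w i) - ∑ θ, p θ * f θ))
      ≤ Real.exp (-(2 * k * t ^ 2)) := by
  -- `Θ` carries no σ-algebra of its own; with the discrete one every function is measurable.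
  let _ : MeasurableSpace Θ := ⊤
  have : DiscreteMeasurableSpace Θ := ⟨fun _ => trivial⟩
  set μ := (pmfOfFintype hp hp1).toMeasure
  have hsub : HasSubgaussianMGF (fun θ => f θ - μ[f]) ((‖(1 : ℝ) - 0‖₊ / 2) ^ 2) μ :=
    hasSubgaussianMGF_of_mem_Icc Measurable.of_discrete.aemeasurable (ae_of_all _ hf)
  have hindep := iIndepFun_pi (μ := fun _ : Fin k => μ)
    (X := fun _ θ => f θ - μ[f]) fun _ => Measurable.of_discrete.aemeasurable
  have := HasSubgaussianMGF.measure_sum_ge_le_of_iIndepFun hindep (s := Finset.univ)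
    (fun i _ => HasSubgaussianMGF.of_map (measurable_pi_apply i).aemeasurable
      (by rwa [(measurePreserving_eval (fun _ => μ) i).map_eq])) (mul_nonneg k.cast_nonneg ht)
  rw [probOf_pi_eq_measureReal hp hp1]
  simp only [μ, integral_pmfOfFintype] at this
  refine this.trans_eq (congrArg Real.exp ?_)
  rcases k.eq_zero_or_pos with rfl | hk
  · simp
  · simp only [sub_zero, nnnorm_one, Finset.sum_const, Finset.card_univ, Fintype.card_fin,
      nsmul_eq_mul]
    push_cast
    field_simp

lemma exp_neg_two_mul_hoeffR_sq {γ : ℝ} (hγ0 : 0 < γ) (hγ1 : γ ≤ 1) {k : ℕ} (hk : 0 < k) :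
    Real.exp (-(2 * k * hoeffR γ k ^ 2)) = γ := by
  have hlog : 0 ≤ Real.log (1 / γ) := Real.log_nonneg (one_le_one_div hγ0 hγ1)
  rw [hoeffR, Real.sq_sqrt (by positivity), one_div, Real.log_inv]
  field_simp
  exact Real.exp_log hγ0

variable (hp : ∀ θ, 0 ≤ p θ) (hp1 : ∑ θ, p θ = 1) (Q : Θ → Prop)
  {k : ℕ} (hk : 0 < k) {γ : ℝ} (hγ0 : 0 < γ) (hγ1 : γ ≤ 1)
include hp hp1 hk hγ0 hγ1

lemma probOf_pi_not_fracOf_lt_add_hoeffR :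
    probOf (fun w : Fin k → Θ => ∏ i, p (w i))
      (fun w => ¬ fracOf Finset.univ (fun i => Q (w i)) < probOf p Q + hoeffR γ k) ≤ γ := by
  have hk' : (0 : ℝ) < k := by exact_mod_cast hk
  refine (probOf_mono (fun w => Finset.prod_nonneg fun i _ => hp _) fun w hw => ?_).trans
    ((probOf_pi_le_sum_sub_mean hp hp1 (f := fun θ => if Q θ then 1 else 0)
      (fun θ => by split_ifs <;> simp) k (t := hoeffR γ k) (Real.sqrt_nonneg _)).trans_eq
      (exp_neg_two_mul_hoeffR_sq hγ0 hγ1 hk))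
  rw [not_lt, fracOf_univ_eq_sum_div, le_div_iff₀ hk'] at hw
  simp only [sum_mul_indicator_eq_probOf, Finset.sum_sub_distrib, Finset.sum_const,
    Finset.card_univ, Fintype.card_fin, nsmul_eq_mul]
  linarith

lemma probOf_pi_not_sub_hoeffR_lt_fracOf :
    probOf (fun w : Fin k → Θ => ∏ i, p (w i))
      (fun w => ¬ probOf p Q - hoeffR γ k < fracOf Finset.univ (fun i => Q (w i))) ≤ γ := by
  refine (probOf_mono (fun w => Finset.prod_nonneg fun i _ => hp _) fun w hw => ?_).trans
    (probOf_pi_not_fracOf_lt_add_hoeffR hp hp1 (fun θ => ¬ Q θ) hk hγ0 hγ1)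
  have : Finset.univ.Nonempty := Finset.univ_nonempty_iff.2 ⟨(⟨0, hk⟩ : Fin k)⟩
  rw [probOf_not hp1, fracOf_not this]
  linarith

lemma probOf_pi_not_abs_fracOf_sub_lt :
    probOf (fun w : Fin k → Θ => ∏ i, p (w i))
      (fun w => ¬ |fracOf Finset.univ (fun i => Q (w i)) - probOf p Q| < hoeffR γ k)
      ≤ 2 * γ := by
  refine (probOf_mono (fun w => Finset.prod_nonneg fun i _ => hp _) fun w hw => ?_).trans
    ((probOf_or_le (fun w => Finset.prod_nonneg fun i _ => hp _)
      (fun w => ¬ fracOf Finset.univ (fun i => Q (w i)) < probOf p Q + hoeffR γ k)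
      (fun w => ¬ probOf p Q - hoeffR γ k < fracOf Finset.univ (fun i => Q (w i)))).trans
      (by linarith [probOf_pi_not_fracOf_lt_add_hoeffR hp hp1 Q hk hγ0 hγ1,
        probOf_pi_not_sub_hoeffR_lt_fracOf hp hp1 Q hk hγ0 hγ1]))
  rw [abs_sub_lt_iff, not_and_or] at hw
  rcases hw with hw | hw
  · exact Or.inl fun h => hw (by linarith)
  · exact Or.inr fun h => hw (by linarith)

end Hoeffding

section Empirical

variable {Z : Type*} [Fintype Z] {k : ℕ}

lemma empDist_eq_fracOf (w : Fin k → Z) (z : Z) :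
    empDist w z = fracOf Finset.univ (fun i => w i = z) := by
  rw [fracOf, Finset.card_univ, Fintype.card_fin]
  rfl

lemma empDist_nonneg (w : Fin k → Z) (z : Z) : 0 ≤ empDist w z := by
  unfold empDist
  positivity

variable {X Y : Type*} [Fintype X] [Fintype Y]

lemma empDist_const_label (u : Fin k → X) (c : Y) (x : X) (y : Y) :
    empDist (fun i => (u i, c)) (x, y)
      = if y = c then fracOf Finset.univ (fun i => u i = x) else 0 := by
  rw [empDist_eq_fracOf]
  split_ifs with hy
  · simp [hy]
  · simp [Ne.symm hy, fracOf]

lemma margX_empDist_const_label (u : Fin k → X) (c : Y) (x : X) :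
    margX (empDist fun i => (u i, c)) x = fracOf Finset.univ (fun i => u i = x) := by
  simp [margX, empDist_const_label]

end Empirical

section MaxOver

variable {Y : Type*} [Fintype Y] {ystar : Y}

lemma le_maxOver (f : Y → ℝ) {y : Y} (hy : y ≠ ystar) : f y ≤ maxOver ystar f :=
  le_ciSup (f := fun y' : {y // y ≠ ystar} => f y') (Set.finite_range _).bddAbove ⟨y, hy⟩

lemma maxOver_le (hY : 1 < Fintype.card Y) {f : Y → ℝ} {c : ℝ}
    (h : ∀ y, y ≠ ystar → f y ≤ c) : maxOver ystar f ≤ c := by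
  obtain ⟨y0, hy0⟩ := Fintype.exists_ne_of_one_lt_card hY ystar
  have : Nonempty {y // y ≠ ystar} := ⟨⟨y0, hy0⟩⟩
  exact ciSup_le fun y => h y.1 y.2

lemma maxOver_sub_le_maxOver_sub_add (hY : 1 < Fintype.card Y) {f f' : Y → ℝ} {r : ℝ}
    (h : ∀ y, |f y - f' y| ≤ r) :
    maxOver ystar (fun y => f y - f ystar) ≤ maxOver ystar (fun y => f' y - f' ystar) + 2 * r :=
  maxOver_le hY fun y hy => by
    have := le_maxOver (fun y => f' y - f' ystar) hy
    linarith [(abs_le.1 (h y)).2, (abs_le.1 (h ystar)).1]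

end MaxOver

section Classifier

variable {X Y : Type*} [Fintype X] [Fintype Y]

/-- The contamination `ε R` can raise a cell by at most `ε`, so a margin above `ε` at `x`
makes `ystar` the only maximiser there. -/
lemma ContamSuboptimal.apply_eq_of_forall_lt {ε : ℝ} {P : X × Y → ℝ} {X' : Set X} {m : X → Y}
    (hm : ContamSuboptimal ε P X' m) (hε0 : 0 ≤ ε) (hε1 : ε ≤ 1) {x : X} (hx : x ∈ X')
    (hP : ∀ y, 0 ≤ P (x, y)) {ystar : Y}
    (hgap : ∀ y, y ≠ ystar → ε < (1 - ε) * (P (x, ystar) - P (x, y))) :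
    m x = ystar := by
  obtain ⟨R, hR0, hR1, hopt⟩ := hm
  set Q : Y → ℝ := fun y => (1 - ε) * P (x, y) + ε * R (x, y) with hQ
  have hQ0 (y : Y) : 0 ≤ Q y :=
    add_nonneg (mul_nonneg (by linarith) (hP y)) (mul_nonneg hε0 (hR0 _))
  by_contra hne
  have hRle : R (x, m x) ≤ 1 := hR1 ▸ Finset.single_le_sum (fun z _ => hR0 z) (Finset.mem_univ _)
  have hlt : Q (m x) < Q ystar := by
    simp only [hQ]
    nlinarith [hgap _ hne, mul_le_mul_of_nonneg_left hRle hε0, mul_nonneg hε0 (hR0 (x, ystar))]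
  have hpos : 0 < ∑ y, Q y := ((hQ0 _).trans_lt hlt).trans_le
    (Finset.single_le_sum (fun y _ => hQ0 y) (Finset.mem_univ ystar))
  exact (hopt x hx hpos ystar).not_gt hlt

end Classifier

section SignalPlanting

variable {X Y : Type*} [Fintype X] [Fintype Y]

/-- The population counterpart of the margin in the theorem; `R0` and `R1` are the
concentration radii of the non-collective and of the collective sample. -/
noncomputable def signalGap (P0 : X × Y → ℝ) (g : X → X) (ystar : Y) (α ε R0 R1 : ℝ) (x : X) :
    ℝ :=
  α * (probOf P0 (fun z => g z.1 = x) - R1)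
    - (1 - α) * (maxOver ystar (fun y => P0 (x, y) - P0 (x, ystar)) + 2 * R0) - ε / (1 - ε)

variable {P0 : X × Y → ℝ} {g : X → X} {ystar : Y} {α ε R0 R1 : ℝ}

lemma signalGap_pos_of_empirical (hY : 1 < Fintype.card Y) (hα0 : 0 ≤ α) (hα1 : α ≤ 1)
    {Phat : X × Y → ℝ} {pHat : ℝ} {x : X}
    (hPhat : ∀ y, |Phat (x, y) - P0 (x, y)| < R1)
    (hpHat : |pHat - probOf P0 (fun z => g z.1 = x)| < R1)
    (h : 0 < α * (pHat - 2 * R1)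
      - (1 - α) * maxOver ystar (fun y => Phat (x, y) - Phat (x, ystar))
      - 2 * (1 - α) * (R0 + R1) - ε / (1 - ε)) :
    0 < signalGap P0 g ystar α ε R0 R1 x := by
  have hΔ := maxOver_sub_le_maxOver_sub_add (ystar := ystar) hY
    (f := fun y => P0 (x, y)) (f' := fun y => Phat (x, y))
    fun y => (abs_sub_comm _ _).trans_le (hPhat y).le
  have hp : pHat - R1 ≤ probOf P0 (fun z => g z.1 = x) := by
    linarith [(abs_sub_lt_iff.1 hpHat).1]
  unfold signalGap
  linarith [mul_le_mul_of_nonneg_left hΔ (sub_nonneg.2 hα1), mul_le_mul_of_nonneg_left hp hα0]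

lemma apply_eq_of_signalGap_pos {n0 n : ℕ} {w0 : Fin n0 → X × Y} {u : Fin n → X}
    {X' : Set X} {m : X → Y}
    (hm : ContamSuboptimal ε
      (fun z => (1 - α) * empDist w0 z + α * empDist (fun i => (u i, ystar)) z) X' m)
    (hε0 : 0 ≤ ε) (hε1 : ε < 1) (hα0 : 0 ≤ α) (hα1 : α ≤ 1) {x : X} (hx : x ∈ X')
    (h0 : ∀ y, |empDist w0 (x, y) - P0 (x, y)| < R0)
    (h1 : |fracOf Finset.univ (fun i => u i = x) - probOf P0 (fun z => g z.1 = x)| < R1)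
    (hgap : 0 < signalGap P0 g ystar α ε R0 R1 x) :
    m x = ystar := by
  refine hm.apply_eq_of_forall_lt hε0 hε1.le hx (fun y => add_nonneg
    (mul_nonneg (sub_nonneg.2 hα1) (empDist_nonneg _ _)) (mul_nonneg hα0 (empDist_nonneg _ _)))
    fun y hy => ?_
  simp only [empDist_const_label, hy, if_true, if_false]
  have hΔ := le_maxOver (fun y => P0 (x, y) - P0 (x, ystar)) hy
  have hy0 := (abs_sub_lt_iff.1 (h0 y)).1
  have hystar0 := (abs_sub_lt_iff.1 (h0 ystar)).2
  have hp := (abs_sub_lt_iff.1 h1).2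
  unfold signalGap at hgap
  have key : ε / (1 - ε) < (1 - α) * (empDist w0 (x, ystar) - empDist w0 (x, y))
      + α * fracOf Finset.univ (fun i => u i = x) := by
    nlinarith [mul_le_mul_of_nonneg_left hΔ (sub_nonneg.2 hα1)]
  calc ε = (1 - ε) * (ε / (1 - ε)) := (mul_div_cancel₀ ε (by linarith)).symm
    _ < (1 - ε) * ((1 - α) * (empDist w0 (x, ystar) - empDist w0 (x, y))
          + α * fracOf Finset.univ (fun i => u i = x)) :=
        mul_lt_mul_of_pos_left key (by linarith)
    _ = _ := by ring

end SignalPlanting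

section Concentration

variable {Θ : Type*} [Fintype Θ] {p : Θ → ℝ} (hp : ∀ θ, 0 ≤ p θ) (hp1 : ∑ θ, p θ = 1)
  {k : ℕ} (hk : 0 < k) {γ : ℝ} (hγ0 : 0 < γ) (hγ1 : γ ≤ 1)
include hp hp1 hk hγ0 hγ1

lemma probOf_pi_not_forall_abs_fracOf_sub_lt {J : Type*} (s : Finset J) (Q : J → Θ → Prop) :
    probOf (fun w : Fin k → Θ => ∏ i, p (w i))
      (fun w => ¬ ∀ j ∈ s, |fracOf Finset.univ (fun i => Q j (w i)) - probOf p (Q j)| < hoeffR γ k)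
      ≤ s.card * (2 * γ) := by
  refine (probOf_not_forall_le (fun w => Finset.prod_nonneg fun i _ => hp _) s _).trans ?_
  rw [← nsmul_eq_mul]
  exact Finset.sum_le_card_nsmul _ _ _ fun j _ =>
    probOf_pi_not_abs_fracOf_sub_lt hp hp1 (Q j) hk hγ0 hγ1

lemma probOf_pi_not_forall_abs_empDist_sub_lt (s : Finset Θ) :
    probOf (fun w : Fin k → Θ => ∏ i, p (w i))
      (fun w => ¬ ∀ θ ∈ s, |empDist w θ - p θ| < hoeffR γ k) ≤ s.card * (2 * γ) := by
  simpa only [← empDist_eq_fracOf, probOf_eq_apply] using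
    probOf_pi_not_forall_abs_fracOf_sub_lt hp hp1 hk hγ0 hγ1 s (fun θ θ' => θ' = θ)

end Concentration

section Success

variable {X Y : Type*} [Fintype X] [Fintype Y] {P0 : X × Y → ℝ} {g : X → X} {ystar : Y}
  {α ε R0 R1 : ℝ}

lemma fracOf_margin_sub_le_success (hY : 1 < Fintype.card Y) (hα0 : 0 ≤ α) (hα1 : α ≤ 1)
    (hε0 : 0 ≤ ε) (hε1 : ε < 1) {n0 n k : ℕ} {w0 : Fin n0 → X × Y} {w : Fin n → X × Y}
    {wt : Fin k → X × Y} {m : X → Y} {r r' : ℝ}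
    (hm : ContamSuboptimal ε
      (fun z => (1 - α) * empDist w0 z + α * empDist (fun i => (g (w i).1, ystar)) z)
      (Set.range g) m)
    (h0 : ∀ z ∈ Finset.univ.image g ×ˢ Finset.univ, |empDist w0 z - P0 z| < R0)
    (h1 : ∀ z ∈ Finset.univ.image g ×ˢ Finset.univ, |empDist w z - P0 z| < R1)
    (h2 : ∀ x ∈ Finset.univ.image g,
      |fracOf Finset.univ (fun i => g (w i).1 = x) - probOf P0 (fun z => g z.1 = x)| < R1)
    (htrain : fracOf Finset.univ (fun i => 0 < signalGap P0 g ystar α ε R0 R1 (g (w i).1))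
      < probOf P0 (fun z => 0 < signalGap P0 g ystar α ε R0 R1 (g z.1)) + r)
    (htest : probOf P0 (fun z => 0 < signalGap P0 g ystar α ε R0 R1 (g z.1)) - r'
      < fracOf Finset.univ (fun i => 0 < signalGap P0 g ystar α ε R0 R1 (g (wt i).1))) :
    fracOf Finset.univ (fun i =>
        0 < α * (margX (empDist fun j => (g (w j).1, ystar)) (g (w i).1) - 2 * R1)
          - (1 - α) * maxOver ystar (fun y' =>
              empDist w (g (w i).1, y') - empDist w (g (w i).1, ystar))
          - 2 * (1 - α) * (R0 + R1) - ε / (1 - ε)) - r - r'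
      ≤ fracOf Finset.univ (fun i => m (g (wt i).1) = ystar) := by
  have hmem : ∀ x y, (g x, y) ∈ Finset.univ.image g ×ˢ (Finset.univ : Finset Y) :=
    fun x y => Finset.mem_product.2
      ⟨Finset.mem_image_of_mem g (Finset.mem_univ x), Finset.mem_univ y⟩
  have h2' : ∀ x, |margX (empDist fun j => (g (w j).1, ystar)) (g x)
      - probOf P0 (fun z => g z.1 = g x)| < R1 := fun x => by
    rw [margX_empDist_const_label]
    exact h2 _ (Finset.mem_image_of_mem g (Finset.mem_univ x))
  have htrain_gap := fracOf_mono Finset.univ fun i hi =>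
    signalGap_pos_of_empirical (ystar := ystar) (ε := ε) (R0 := R0) hY hα0 hα1
      (fun y => h1 _ (hmem (w i).1 y)) (h2' (w i).1) hi
  have htest_gap := fracOf_mono Finset.univ fun i hi =>
    apply_eq_of_signalGap_pos hm hε0 hε1 hα0 hα1 ⟨(wt i).1, rfl⟩ (fun y => h0 _ (hmem (wt i).1 y))
      (h2 _ (Finset.mem_image_of_mem g (Finset.mem_univ (wt i).1))) hi
  linarith

end Success

lemma hoeffding_budget {δ δt a b : ℝ} (hδ0 : 0 < δ) (hδ1 : δ < 1) (ha : 1 ≤ a) (hb : 2 ≤ b)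
    (hδt : δt = δ / (10 * (a * b))) :
    0 < δt ∧ δt ≤ 1 ∧ a * b * (2 * δt) = δ / 5 ∧ a * (2 * δt) ≤ δ / 10 := by
  subst hδt
  refine ⟨by positivity, ?_, by field_simp; ring, ?_⟩
  · rw [div_le_one (by positivity)]
    nlinarith
  · rw [show a * (2 * (δ / (10 * (a * b)))) = δ / (5 * b) by field_simp; ring]
    gcongr
    linarith

theorem stmt_16_general {X Y : Type*} [Fintype X] [Fintype Y]
    (hY : 2 ≤ Fintype.card Y)
    (n0 : ℕ) (hn0 : 1 ≤ n0) (n : ℕ) (hn : 1 ≤ n)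
    (N : ℕ) (hN : N = n0 + n)
    (Ntest : ℕ) (hNtest : 1 ≤ Ntest)
    (P0 : X × Y → ℝ) (hP0nn : ∀ z, 0 ≤ P0 z) (hP0sum : ∑ z, P0 z = 1)
    (g : X → X) (ystar : Y)
    (h : X × Y → X × Y) (hstrat : ∀ x y, h (x, y) = (g x, ystar))
    (ε : ℝ) (hε0 : 0 ≤ ε) (hε1 : ε < 1 / 2)
    (δ : ℝ) (hδ0 : 0 < δ) (hδ1 : δ < 1)
    (δt : ℝ) (hδt : δt = δ / (10 * ((Finset.univ.image g).card * Fintype.card Y)))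
    (mhat : (Fin n0 → X × Y) → (Fin n → X × Y) → X → Y)
    (hsub : ∀ (w0 : Fin n0 → X × Y) (w : Fin n → X × Y),
      ContamSuboptimal ε
        (fun z => (1 - (n : ℝ) / N) * empDist w0 z
          + ((n : ℝ) / N) * empDist (fun i => h (w i)) z)
        (Set.range g) (mhat w0 w)) :
    1 - δ ≤
      probOf
        (fun θ : (Fin n0 → X × Y) × (Fin n → X × Y) × (Fin Ntest → X × Y) =>
          (∏ i, P0 (θ.1 i)) * (∏ i, P0 (θ.2.1 i)) * ∏ i, P0 (θ.2.2 i))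
        (fun θ =>
          fracOf (Finset.univ : Finset (Fin n)) (fun i =>
              0 <
                ((n : ℝ) / N) *
                    (margX (empDist fun j => h (θ.2.1 j)) (g (θ.2.1 i).1)
                      - 2 * hoeffR δt n)
                  - (1 - (n : ℝ) / N) *
                      maxOver ystar (fun y' =>
                        empDist θ.2.1 (g (θ.2.1 i).1, y')
                          - empDist θ.2.1 (g (θ.2.1 i).1, ystar))
                  - 2 * (1 - (n : ℝ) / N) * (hoeffR δt n0 + hoeffR δt n)
                  - ε / (1 - ε))
            - hoeffR (δ / 4) n - hoeffR (δ / 4) Ntest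
          ≤ fracOf (Finset.univ : Finset (Fin Ntest))
              (fun i => mhat θ.1 θ.2.1 (g (θ.2.2 i).1) = ystar)) := by
  obtain rfl : h = fun z => (g z.1, ystar) := funext fun z => hstrat z.1 z.2
  obtain ⟨z0, -⟩ := Finset.exists_ne_zero_of_sum_ne_zero (hP0sum.trans_ne one_ne_zero)
  have hα1 : (n : ℝ) / N ≤ 1 :=
    div_le_one_of_le₀ (by rw [hN]; exact_mod_cast Nat.le_add_left n n0) (Nat.cast_nonneg _)
  obtain ⟨hδt0, hδt1, hcell, hfeat⟩ := hoeffding_budget hδ0 hδ1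
    (by exact_mod_cast ((Finset.univ_nonempty_iff.2 ⟨z0.1⟩).image g).card_pos)
    (by exact_mod_cast hY) hδt
  have hP (k : ℕ) (w : Fin k → X × Y) : 0 ≤ ∏ i, P0 (w i) := Finset.prod_nonneg fun i _ => hP0nn _
  set S := Finset.univ.image g
  set A : X → Prop := fun x =>
    0 < signalGap P0 g ystar ((n : ℝ) / N) ε (hoeffR δt n0) (hoeffR δt n) x
  have hcells := fun (k : ℕ) (hk : 0 < k) =>
    (probOf_pi_not_forall_abs_empDist_sub_lt hP0nn hP0sum hk hδt0 hδt1 (S ×ˢ Finset.univ)).trans_eq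
      (by rw [Finset.card_product, Finset.card_univ, Nat.cast_mul, hcell])
  have hcoll := (probOf_not_and_le (hP n) _ _).trans <| add_le_add
    (probOf_pi_not_forall_abs_fracOf_sub_lt hP0nn hP0sum hn hδt0 hδt1 S fun x z => g z.1 = x)
    ((probOf_not_and_le (hP n) _ _).trans <| add_le_add (hcells n hn)
      (probOf_pi_not_fracOf_lt_add_hoeffR hP0nn hP0sum (fun z => A (g z.1)) hn
        (by positivity : 0 < δ / 4) (by linarith)))
  refine le_trans (le_of_eq (by ring)) <| le_probOf_prod_prod_of_forall (βa := δ / 5)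
    (βb := δ / 10 + (δ / 5 + δ / 4)) (βc := δ / 4) (hP n0) (hP n) (hP Ntest)
    (sum_pi_prod_eq_one hP0sum n0) (sum_pi_prod_eq_one hP0sum n) (sum_pi_prod_eq_one hP0sum Ntest)
    (hcells n0 hn0) (hcoll.trans (by linarith))
    (probOf_pi_not_sub_hoeffR_lt_fracOf hP0nn hP0sum (fun z => A (g z.1)) hNtest
      (by positivity : 0 < δ / 4) (by linarith))
    fun w0 w wt h0 ⟨h2, h1, htrain⟩ htest => fracOf_margin_sub_le_success hY (by positivity) hα1
      hε0 (by linarith) (hsub w0 w) h0 h1 h2 htrain htest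

/-- single-collective signal planting, conditional formulation:
one collective of size `n` applies the feature-label planting strategy
`h(x,y) = (g x, y*)`; with a non-collective sample of size `n₀` and a test sample of
size `Ntest`, all i.i.d. from `P₀` (modelled by the product pmf on the joint sample
space), if the trained classifier is `ε`-contamination-suboptimal on `𝒳* = g(𝒳)`
under the post-edit empirical mixture for every realization of the training data,
then with probability at least `1 − δ` the success `Ŝ` satisfies the stated
lower bound. -/
theorem stmt_16 {X Y : Type*} [Fintype X] [Fintype Y] [Nonempty X] [Nonempty Y]
    (hY : 2 ≤ Fintype.card Y)
    (n0 : ℕ) (hn0 : 1 ≤ n0) (n : ℕ) (hn : 1 ≤ n)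
    (N : ℕ) (hN : N = n0 + n)
    (Ntest : ℕ) (hNtest : 1 ≤ Ntest)
    (P0 : X × Y → ℝ) (hP0nn : ∀ z, 0 ≤ P0 z) (hP0sum : ∑ z, P0 z = 1)
    (g : X → X) (ystar : Y)
    (h : X × Y → X × Y) (hstrat : ∀ x y, h (x, y) = (g x, ystar))
    (ε : ℝ) (hε0 : 0 ≤ ε) (hε1 : ε < 1 / 2)
    (δ : ℝ) (hδ0 : 0 < δ) (hδ1 : δ < 1)
    (δt : ℝ) (hδt : δt = δ / (10 * ((Finset.univ.image g).card * Fintype.card Y)))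
    (mhat : (Fin n0 → X × Y) → (Fin n → X × Y) → X → Y)
    (hsub : ∀ (w0 : Fin n0 → X × Y) (w : Fin n → X × Y),
      ContamSuboptimal ε
        (fun z => (1 - (n : ℝ) / N) * empDist w0 z
          + ((n : ℝ) / N) * empDist (fun i => h (w i)) z)
        (Set.range g) (mhat w0 w)) :
    1 - δ ≤
      probOf
        (fun θ : (Fin n0 → X × Y) × (Fin n → X × Y) × (Fin Ntest → X × Y) =>
          (∏ i, P0 (θ.1 i)) * (∏ i, P0 (θ.2.1 i)) * ∏ i, P0 (θ.2.2 i))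
        (fun θ =>
          fracOf (Finset.univ : Finset (Fin n)) (fun i =>
              0 <
                ((n : ℝ) / N) *
                    (margX (empDist fun j => h (θ.2.1 j)) (g (θ.2.1 i).1)
                      - 2 * hoeffR δt n)
                  - (1 - (n : ℝ) / N) *
                      maxOver ystar (fun y' =>
                        empDist θ.2.1 (g (θ.2.1 i).1, y')
                          - empDist θ.2.1 (g (θ.2.1 i).1, ystar))
                  - 2 * (1 - (n : ℝ) / N) * (hoeffR δt n0 + hoeffR δt n)
                  - ε / (1 - ε))
            - hoeffR (δ / 4) n - hoeffR (δ / 4) Ntest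
          ≤ fracOf (Finset.univ : Finset (Fin Ntest))
              (fun i => mhat θ.1 θ.2.1 (g (θ.2.2 i).1) = ystar)) :=
  stmt_16_general hY n0 hn0 n hn N hN Ntest hNtest P0 hP0nn hP0sum g ystar h hstrat ε hε0 hε1 δ hδ0
    hδ1 δt hδt mhat hsub
end
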